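/- arXiv:2311.17934 — 2 statements merged into one kernel-verified Lean document; each statement's English description precedes it below -/
import Mathlib

section
/- (Representation theorem) Let L be a lattice and let A be a nonempty essential subset of 𝔐(L), i.e. A is compact in τ_L, d(A) is open in σ_L, and i(d(A)) = A. Then there exists x ∈ L such that A = δ_L(x). -/
/-- An ideal of a lattice: nonempty, downward closed, closed under finite joins. -/
def IsLatIdeal {L : Type*} [Lattice L] (I : Set L) : Prop :=
  I.Nonempty ∧ (∀ ⦃x y : L⦄, x ≤ y → y ∈ I → x ∈ I) ∧
    ∀ ⦃x : L⦄, x ∈ I → ∀ ⦃y : L⦄, y ∈ I → x ⊔ y ∈ I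

/-- A filter of a lattice: nonempty, upward closed, closed under finite meets. -/
def IsLatFilter {L : Type*} [Lattice L] (F : Set L) : Prop :=
  F.Nonempty ∧ (∀ ⦃x y : L⦄, x ≤ y → x ∈ F → y ∈ F) ∧
    ∀ ⦃x : L⦄, x ∈ F → ∀ ⦃y : L⦄, y ∈ F → x ⊓ y ∈ F

/-- A comaximal pair of a lattice. -/
def IsComaximalPair {L : Type*} [Lattice L] (I F : Set L) : Prop :=
  IsLatIdeal I ∧ IsLatFilter F ∧ I ∩ F = ∅ ∧
    (∀ J : Set L, IsLatIdeal J → I ⊂ J → (J ∩ F).Nonempty) ∧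
    (∀ K : Set L, IsLatFilter K → F ⊂ K → (I ∩ K).Nonempty)

/-- 𝔐(L): the set (type) of comaximal pairs of L. -/
abbrev ComaxPairs (L : Type*) [Lattice L] :=
  {p : Set L × Set L // IsComaximalPair p.1 p.2}

/-- δ_L(x) = {(I,F) ∈ 𝔐(L) : x ∉ I}. -/
def deltaL {L : Type*} [Lattice L] (x : L) : Set (ComaxPairs L) :=
  {p | x ∉ p.1.1}

/-- ε_L(x) = {(I,F) ∈ 𝔐(L) : x ∈ F}. -/
def epsL {L : Type*} [Lattice L] (x : L) : Set (ComaxPairs L) :=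
  {p | x ∈ p.1.2}

/-- τ_L : the topology on 𝔐(L) generated by the subbasis {δ_L(x) : x ∈ L}. -/
def tauL (L : Type*) [Lattice L] : TopologicalSpace (ComaxPairs L) :=
  TopologicalSpace.generateFrom (Set.range (deltaL (L := L)))

/-- σ_L : the topology on 𝔐(L) generated by the subbasis {ε_L(x) : x ∈ L}. -/
def sigmaL (L : Type*) [Lattice L] : TopologicalSpace (ComaxPairs L) :=
  TopologicalSpace.generateFrom (Set.range (epsL (L := L)))

/-- Distributivity of a lattice. -/
def IsDistrib (L : Type*) [Lattice L] : Prop :=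
  ∀ x y z : L, x ⊓ (y ⊔ z) = (x ⊓ y) ⊔ (x ⊓ z)

/-- A prime ideal of a lattice. -/
def IsPrimeIdeal {L : Type*} [Lattice L] (P : Set L) : Prop :=
  IsLatIdeal P ∧ P ≠ Set.univ ∧ ∀ x y : L, x ⊓ y ∈ P → x ∈ P ∨ y ∈ P

/-- The transition function d on subsets of 𝔐(L). -/
def dTrans {L : Type*} [Lattice L] (A : Set (ComaxPairs L)) : Set (ComaxPairs L) :=
  {p | ∀ q : ComaxPairs L, p.1.2 ⊆ q.1.2 → q ∈ A}

/-- The transition function i on subsets of 𝔐(L). -/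
def iTrans {L : Type*} [Lattice L] (A : Set (ComaxPairs L)) : Set (ComaxPairs L) :=
  {p | ∃ q ∈ A, p.1.1 ⊆ q.1.1}

-- auxiliary lemmas
section
variable {L : Type*} [Lattice L]

/-- Zorn: maximal ideal containing I₀ and disjoint from a set G. -/
lemma exists_max_ideal (I₀ G : Set L) (hI : IsLatIdeal I₀) (hd : I₀ ∩ G = ∅) :
    ∃ J, I₀ ⊆ J ∧ Maximal (fun J => IsLatIdeal J ∧ J ∩ G = ∅) J := by
  have := zorn_subset_nonempty {J : Set L | IsLatIdeal J ∧ J ∩ G = ∅} ?_ I₀ ⟨hI, hd⟩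
  · obtain ⟨m, hm1, hm2⟩ := this
    exact ⟨m, hm1, hm2⟩
  · intro c hc hchain hcne
    refine ⟨⋃₀ c, ⟨⟨?_, ?_, ?_⟩, ?_⟩, fun s hs => Set.subset_sUnion_of_mem hs⟩
    · obtain ⟨s, hs⟩ := hcne
      obtain ⟨x, hx⟩ := (hc hs).1.1
      exact ⟨x, s, hs, hx⟩
    · rintro x y hxy ⟨s, hs, hy⟩
      exact ⟨s, hs, (hc hs).1.2.1 hxy hy⟩
    · rintro x ⟨s, hs, hx⟩ y ⟨t, ht, hy⟩
      rcases hchain.total hs ht with h | h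
      · exact ⟨t, ht, (hc ht).1.2.2 (h hx) hy⟩
      · exact ⟨s, hs, (hc hs).1.2.2 hx (h hy)⟩
    · rw [Set.eq_empty_iff_forall_notMem]
      rintro x ⟨⟨s, hs, hx⟩, hxG⟩
      have := (hc hs).2
      rw [Set.eq_empty_iff_forall_notMem] at this
      exact this x ⟨hx, hxG⟩

lemma exists_max_filter (F₀ J : Set L) (hF : IsLatFilter F₀) (hd : J ∩ F₀ = ∅) :
    ∃ G, F₀ ⊆ G ∧ Maximal (fun G => IsLatFilter G ∧ J ∩ G = ∅) G := by
  have := zorn_subset_nonempty {G : Set L | IsLatFilter G ∧ J ∩ G = ∅} ?_ F₀ ⟨hF, hd⟩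
  · obtain ⟨m, hm1, hm2⟩ := this
    exact ⟨m, hm1, hm2⟩
  · intro c hc hchain hcne
    refine ⟨⋃₀ c, ⟨⟨?_, ?_, ?_⟩, ?_⟩, fun s hs => Set.subset_sUnion_of_mem hs⟩
    · obtain ⟨s, hs⟩ := hcne
      obtain ⟨x, hx⟩ := (hc hs).1.1
      exact ⟨x, s, hs, hx⟩
    · rintro x y hxy ⟨s, hs, hy⟩
      exact ⟨s, hs, (hc hs).1.2.1 hxy hy⟩
    · rintro x ⟨s, hs, hx⟩ y ⟨t, ht, hy⟩
      rcases hchain.total hs ht with h | h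
      · exact ⟨t, ht, (hc ht).1.2.2 (h hx) hy⟩
      · exact ⟨s, hs, (hc hs).1.2.2 hx (h hy)⟩
    · rw [Set.eq_empty_iff_forall_notMem]
      rintro x ⟨hxJ, s, hs, hx⟩
      have := (hc hs).2
      rw [Set.eq_empty_iff_forall_notMem] at this
      exact this x ⟨hxJ, hx⟩

/-- Extension: a disjoint ideal-filter pair extends to a comaximal pair. -/
lemma exists_comax_extend {I₀ F₀ : Set L} (hI : IsLatIdeal I₀) (hF : IsLatFilter F₀)
    (hd : I₀ ∩ F₀ = ∅) : ∃ p : ComaxPairs L, I₀ ⊆ p.1.1 ∧ F₀ ⊆ p.1.2 := by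
  obtain ⟨J, hIJ, hJ⟩ := exists_max_ideal I₀ F₀ hI hd
  have hJF₀ : J ∩ F₀ = ∅ := hJ.1.2
  obtain ⟨G, hFG, hG⟩ := exists_max_filter F₀ J hF hJF₀
  refine ⟨⟨(J, G), hJ.1.1, hG.1.1, hG.1.2, ?_, ?_⟩, hIJ, hFG⟩
  · intro J' hJ' hJJ'
    by_contra hcon
    rw [Set.not_nonempty_iff_eq_empty] at hcon
    have hJ'F₀ : J' ∩ F₀ = ∅ := by
      rw [Set.eq_empty_iff_forall_notMem] at hcon ⊢
      exact fun x ⟨hx1, hx2⟩ => hcon x ⟨hx1, hFG hx2⟩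
    exact hJJ'.2 (hJ.2 ⟨hJ', hJ'F₀⟩ hJJ'.1)
  · intro K hK hGK
    by_contra hcon
    rw [Set.not_nonempty_iff_eq_empty] at hcon
    exact hGK.2 (hG.2 ⟨hK, hcon⟩ hGK.1)

/-- δ(m) ⊆ i(ε(m)) style: if m ∉ I_p then some comaximal pair extends (I_p, ↑m). -/
lemma mem_iTrans_of_eps_subset {A : Set (ComaxPairs L)} {m : L} (hsub : epsL m ⊆ A)
    {p : ComaxPairs L} (hp : m ∉ p.1.1) : p ∈ iTrans A := by
  have hI := p.2.1
  have hd : p.1.1 ∩ {y | m ≤ y} = ∅ := by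
    rw [Set.eq_empty_iff_forall_notMem]
    rintro x ⟨hx1, hx2⟩
    exact hp (hI.2.1 hx2 hx1)
  obtain ⟨q, hq1, hq2⟩ := exists_comax_extend hI ⟨⟨m, le_refl m⟩,
    fun x y hxy hx => le_trans hx hxy, fun x hx y hy => le_inf hx hy⟩ hd
  exact ⟨q, hsub (hq2 (le_refl m)), hq1⟩

/-- Open sets of σ_L: each point is inside some ε(m) within the open set. -/
lemma sigma_open_mem {U : Set (ComaxPairs L)} (hU : @IsOpen _ (sigmaL L) U)
    {p : ComaxPairs L} (hp : p ∈ U) : ∃ m, m ∈ p.1.2 ∧ epsL m ⊆ U := by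
  have hU' : TopologicalSpace.GenerateOpen (Set.range (epsL (L := L))) U := hU
  clear hU
  induction hU' with
  | basic s hs =>
    obtain ⟨x, rfl⟩ := hs
    exact ⟨x, hp, subset_rfl⟩
  | univ =>
    obtain ⟨m, hm⟩ := p.2.2.1.1
    exact ⟨m, hm, Set.subset_univ _⟩
  | inter s t _ _ ihs iht =>
    obtain ⟨m1, hm1, hs1⟩ := ihs hp.1
    obtain ⟨m2, hm2, hs2⟩ := iht hp.2
    refine ⟨m1 ⊓ m2, p.2.2.1.2.2 hm1 hm2, fun q hq => ⟨?_, ?_⟩⟩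
    · exact hs1 (q.2.2.1.2.1 inf_le_left hq)
    · exact hs2 (q.2.2.1.2.1 inf_le_right hq)
  | sUnion S _ ih =>
    obtain ⟨s, hs, hps⟩ := hp
    obtain ⟨m, hm, hsub⟩ := ih s hs hps
    exact ⟨m, hm, hsub.trans (Set.subset_sUnion_of_mem hs)⟩

lemma deltaL_isOpen (x : L) : @IsOpen _ (tauL L) (deltaL x) :=
  TopologicalSpace.GenerateOpen.basic _ ⟨x, rfl⟩

end

/-- Representation theorem: every nonempty essential subset of 𝔐(L)
is of the form δ_L(x). -/
theorem essential_eq_deltaL {L : Type*} [Lattice L] (A : Set (ComaxPairs L))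
    (hne : A.Nonempty) (hcomp : @IsCompact (ComaxPairs L) (tauL L) A)
    (hopen : @IsOpen (ComaxPairs L) (sigmaL L) (dTrans A)) (hstable : iTrans (dTrans A) = A) :
    ∃ x : L, A = deltaL x := by
  -- for each p ∈ A, find m p with m p ∉ I_p and δ(m p) ⊆ A
  have key : ∀ p ∈ A, ∃ m : L, m ∉ p.1.1 ∧ deltaL m ⊆ A := by
    intro p hp
    rw [← hstable] at hp
    obtain ⟨q, hqd, hIq⟩ := hp
    obtain ⟨m, hmF, hsub⟩ := sigma_open_mem hopen hqd
    have hmI : m ∉ q.1.1 := by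
      intro h
      have := q.2.2.2.1
      rw [Set.eq_empty_iff_forall_notMem] at this
      exact this m ⟨h, hmF⟩
    refine ⟨m, fun h => hmI (hIq h), fun r hr => ?_⟩
    rw [← hstable]
    exact mem_iTrans_of_eps_subset hsub hr
  have key' : ∀ p : ComaxPairs L, ∃ mm : L, p ∈ A → mm ∉ p.1.1 ∧ deltaL mm ⊆ A := by
    intro p
    by_cases hp : p ∈ A
    · obtain ⟨mm, h1, h2⟩ := key p hp
      exact ⟨mm, fun _ => ⟨h1, h2⟩⟩
    · obtain ⟨q, -⟩ := hne
      exact ⟨q.2.1.1.choose, fun h => absurd h hp⟩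
  choose m hm using key'
  -- open cover of A by δ(m p), p ∈ A
  obtain ⟨t, ht⟩ := @IsCompact.elim_finite_subcover (ComaxPairs L) (tauL L) A A hcomp
    (fun p : A => deltaL (m p)) (fun p => deltaL_isOpen _)
    (fun p hp => Set.mem_iUnion.mpr ⟨⟨p, hp⟩, (hm p hp).1⟩)
  have htne : t.Nonempty := by
    rcases hne with ⟨p, hp⟩
    rcases Set.mem_iUnion₂.mp (ht hp) with ⟨i, hi, _⟩
    exact ⟨i, hi⟩
  refine ⟨t.sup' htne (fun p => m ↑p), Set.Subset.antisymm ?_ ?_⟩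
  · intro p hp
    rcases Set.mem_iUnion₂.mp (ht hp) with ⟨i, hit, hi⟩
    intro hcon
    have hle : m ↑i ≤ t.sup' htne (fun p => m ↑p) := Finset.le_sup' (fun p : A => m ↑p) hit
    exact hi (p.2.1.2.1 hle hcon)
  · intro p hp
    by_contra hcon
    have hall : ∀ i ∈ t, m ↑i ∈ p.1.1 := by
      intro i _
      by_contra h
      exact hcon ((hm i.1 i.2).2 h)
    have : t.sup' htne (fun p => m ↑p) ∈ p.1.1 :=
      Finset.sup'_mem p.1.1 (fun x hx y hy => p.2.1.2.2 hx hy) t htne _ hall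
    exact hp this
end

section
/- Let L be a distributive lattice. Then (i) the topologies τ_L and σ_L on 𝔐(L) coincide, and (ii) the map b_L : spec(L) → 𝔐(L), P ↦ (P, L \ P), is a homeomorphism from spec(L), equipped with the topology generated by the sets d_L(x) = {P ∈ spec(L) : x ∉ P} for x ∈ L, onto (𝔐(L), τ_L). -/
/-- spec(L): the type of prime ideals of L. -/
abbrev LatSpec (L : Type*) [Lattice L] := {P : Set L // IsPrimeIdeal P}

/-- d_L(x) = {P ∈ spec(L) : x ∉ P}. -/
def dZar {L : Type*} [Lattice L] (x : L) : Set (LatSpec L) := {P | x ∉ P.1}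

/-- The Zariski topology on spec(L), generated by the sets d_L(x). -/
def zariski (L : Type*) [Lattice L] : TopologicalSpace (LatSpec L) :=
  TopologicalSpace.generateFrom (Set.range (dZar (L := L)))

section Aux

variable {L : Type*} [Lattice L]

lemma comax_compl (hL : IsDistrib L) {I F : Set L} (h : IsComaximalPair I F) :
    F = Iᶜ := by
  obtain ⟨hI, hF, hdis, hJ, hK⟩ := h
  have hdis' : ∀ a, a ∈ I → a ∈ F → False := by
    intro a ha hb
    rw [Set.eq_empty_iff_forall_notMem] at hdis
    exact hdis a ⟨ha, hb⟩
  ext x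
  simp only [Set.mem_compl_iff]
  constructor
  · intro hxF hxI; exact hdis' x hxI hxF
  · intro hxI
    by_contra hxF
    obtain ⟨i0, hi0⟩ := hI.1
    obtain ⟨f0, hf0⟩ := hF.1
    set J : Set L := {y | ∃ i ∈ I, y ≤ i ⊔ x} with hJdef
    have hJideal : IsLatIdeal J := by
      refine ⟨⟨x, i0, hi0, le_sup_right⟩, ?_, ?_⟩
      · rintro a b hab ⟨i, hi, hb⟩; exact ⟨i, hi, hab.trans hb⟩
      · rintro a ⟨i, hi, ha⟩ b ⟨i', hi', hb⟩
        refine ⟨i ⊔ i', hI.2.2 hi hi', sup_le ?_ ?_⟩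
        · exact ha.trans (sup_le ((le_sup_left : i ≤ i ⊔ i').trans le_sup_left) le_sup_right)
        · exact hb.trans (sup_le ((le_sup_right : i' ≤ i ⊔ i').trans le_sup_left) le_sup_right)
    have hIJ : I ⊂ J := by
      constructor
      · intro i hi; exact ⟨i, hi, le_sup_left⟩
      · intro hsub; exact hxI (hsub ⟨i0, hi0, le_sup_right⟩)
    obtain ⟨f, ⟨i, hiI, hfle⟩, hfF⟩ := hJ J hJideal hIJ
    set K : Set L := {y | ∃ g ∈ F, g ⊓ x ≤ y} with hKdef
    have hKfilter : IsLatFilter K := by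
      refine ⟨⟨x, f0, hf0, inf_le_right⟩, ?_, ?_⟩
      · rintro a b hab ⟨g, hg, ha⟩; exact ⟨g, hg, ha.trans hab⟩
      · rintro a ⟨g, hg, ha⟩ b ⟨g', hg', hb⟩
        refine ⟨g ⊓ g', hF.2.2 hg hg', le_inf ?_ ?_⟩
        · exact (inf_le_inf_right x inf_le_left).trans ha
        · exact (inf_le_inf_right x inf_le_right).trans hb
    have hFK : F ⊂ K := by
      constructor
      · intro g hg; exact ⟨g, hg, inf_le_left⟩
      · intro hsub; exact hxF (hsub ⟨f0, hf0, inf_le_right⟩)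
    obtain ⟨i', hi'I, f', hf'F, hle'⟩ := hK K hKfilter hFK
    have hgF : f ⊓ f' ∈ F := hF.2.2 hfF hf'F
    have h1 : f ⊓ f' = (f ⊓ f') ⊓ (i ⊔ x) :=
      (inf_eq_left.mpr ((inf_le_left.trans hfle))).symm
    have h2 : f ⊓ f' ≤ i ⊔ i' := by
      rw [h1, hL]
      refine sup_le (inf_le_right.trans le_sup_left) ?_
      refine le_trans ?_ (le_sup_right.trans (le_refl (i ⊔ i')))
      exact (inf_le_inf_right x inf_le_right).trans hle'
    exact hdis' _ (hI.2.1 h2 (hI.2.2 hiI hi'I)) hgF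

lemma prime_of_comax (hL : IsDistrib L) {I F : Set L} (h : IsComaximalPair I F) :
    IsPrimeIdeal I := by
  have hc := comax_compl hL h
  obtain ⟨hI, hF, hdis, -, -⟩ := h
  refine ⟨hI, ?_, ?_⟩
  · intro hIu
    obtain ⟨g, hg⟩ := hF.1
    have : g ∈ Iᶜ := hc ▸ hg
    exact this (hIu ▸ Set.mem_univ g)
  · intro x y hxy
    by_contra hcon
    push_neg at hcon
    have hx : x ∈ F := hc ▸ (hcon.1 : x ∈ Iᶜ)
    have hy : y ∈ F := hc ▸ (hcon.2 : y ∈ Iᶜ)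
    have : x ⊓ y ∈ Iᶜ := hc ▸ hF.2.2 hx hy
    exact this hxy

lemma comax_of_prime {P : Set L} (h : IsPrimeIdeal P) :
    IsComaximalPair P Pᶜ := by
  obtain ⟨hP, hne, hpr⟩ := h
  have hfilt : IsLatFilter Pᶜ := by
    refine ⟨?_, ?_, ?_⟩
    · rcases Set.ne_univ_iff_exists_notMem _ |>.mp hne with ⟨x, hx⟩
      exact ⟨x, hx⟩
    · intro a b hab ha hb; exact ha (hP.2.1 hab hb)
    · intro a ha b hb hmem
      rcases hpr a b hmem with h | h
      · exact ha h
      · exact hb h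
  refine ⟨hP, hfilt, ?_, ?_, ?_⟩
  · rw [Set.eq_empty_iff_forall_notMem]
    rintro a ⟨h1, h2⟩; exact h2 h1
  · intro J hJ hPJ
    obtain ⟨y, hyJ, hyP⟩ := Set.exists_of_ssubset hPJ
    exact ⟨y, hyJ, hyP⟩
  · intro K hK hPK
    obtain ⟨y, hyK, hyP⟩ := Set.exists_of_ssubset hPK
    simp only [Set.mem_compl_iff, not_not] at hyP
    exact ⟨y, hyP, hyK⟩

end Aux

/-- for a distributive lattice, τ_L = σ_L and P ↦ (P, L \ P) is a
homeomorphism from spec(L) onto (𝔐(L), τ_L). -/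
theorem distrib_tau_eq_sigma_and_spec_homeomorph {L : Type*} [Lattice L]
    (hL : IsDistrib L) :
    tauL L = sigmaL L ∧
      ∃ h : @Homeomorph (LatSpec L) (ComaxPairs L) (zariski L) (tauL L),
        ∀ P : LatSpec L, (h P).1 = (P.1, P.1ᶜ) := by
  have key : ∀ p : ComaxPairs L, p.1.2 = p.1.1ᶜ := fun p => comax_compl hL p.2
  constructor
  · unfold tauL sigmaL
    have hde : deltaL (L := L) = epsL (L := L) := by
      funext x
      ext p
      simp only [deltaL, epsL, Set.mem_setOf_eq, key p, Set.mem_compl_iff]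
    rw [hde]
  · letI tS : TopologicalSpace (LatSpec L) := zariski L
    letI tM : TopologicalSpace (ComaxPairs L) := tauL L
    refine ⟨⟨⟨fun P => ⟨(P.1, P.1ᶜ), comax_of_prime P.2⟩,
        fun p => ⟨p.1.1, prime_of_comax hL p.2⟩, ?_, ?_⟩, ?_, ?_⟩, fun P => rfl⟩
    · intro P; rfl
    · intro p
      apply Subtype.ext
      exact Prod.ext rfl (key p).symm
    · show Continuous _
      apply continuous_generateFrom_iff.mpr
      rintro s ⟨x, rfl⟩
      show IsOpen (dZar x)
      exact TopologicalSpace.isOpen_generateFrom_of_mem ⟨x, rfl⟩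
    · show Continuous _
      apply continuous_generateFrom_iff.mpr
      rintro s ⟨x, rfl⟩
      show IsOpen (deltaL x)
      exact TopologicalSpace.isOpen_generateFrom_of_mem ⟨x, rfl⟩
end
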